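/- arXiv:2208.13976 — 9 statements merged into one kernel-verified Lean document; each statement's English description precedes it below -/
import Mathlib

section
/- Let c0, c1 > 0 with c0/2 + c1 < 1, and for each natural number n ≥ 1 define p_n = (c0/2 + c1)^n − c1^n. If N = ⌊log(log c1 / log(c0/2 + c1)) / log((c0/2 + c1)/c1)⌋ then max over all n ≥ 1 of p_n equals max{p_N, p_{N+1}}. -/
/-- For c0, c1 > 0 with c0/2 + c1 < 1, p n = (c0/2+c1)^n - c1^n, and
N = ⌊log(log c1 / log(c0/2+c1)) / log((c0/2+c1)/c1)⌋  (with N ≥ 1),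
the maximum of p n over n ≥ 1 equals max {p N, p (N+1)}. -/
theorem stmt1 (c0 c1 : ℝ) (hc0 : 0 < c0) (hc1 : 0 < c1) (hsum : c0 / 2 + c1 < 1)
    (p : ℕ → ℝ) (hp : ∀ n, p n = (c0 / 2 + c1) ^ n - c1 ^ n)
    (N : ℕ)
    (hN : N = ⌊Real.log (Real.log c1 / Real.log (c0 / 2 + c1)) /
      Real.log ((c0 / 2 + c1) / c1)⌋₊)
    (hN1 : 1 ≤ N) :
    IsGreatest {x : ℝ | ∃ n : ℕ, 1 ≤ n ∧ x = p n} (max (p N) (p (N + 1))) := by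
  have hb : (0:ℝ) < c1 := hc1
  set a := c0 / 2 + c1 with ha_def
  have hba : c1 < a := by
    have : 0 < c0 / 2 := by linarith
    simp only [ha_def]; linarith
  have ha0 : (0:ℝ) < a := hb.trans hba
  have ha1 : a < 1 := hsum
  have hla : Real.log a < 0 := Real.log_neg ha0 ha1
  have hlb : Real.log c1 < Real.log a := Real.log_lt_log hb hba
  have hlb0 : Real.log c1 < 0 := hlb.trans hla
  have hr1 : 1 < a / c1 := (one_lt_div hb).2 hba
  have hlr : 0 < Real.log (a / c1) := Real.log_pos hr1
  have hq1 : 1 < Real.log c1 / Real.log a := by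
    rw [one_lt_div_of_neg hla]; exact hlb
  have hq0 : 0 < Real.log c1 / Real.log a := zero_lt_one.trans hq1
  set t := Real.log (Real.log c1 / Real.log a) / Real.log (a / c1) with ht_def
  have ht0 : 0 < t := div_pos (Real.log_pos hq1) hlr
  -- key equivalence
  have key : ∀ x : ℝ, (a ^ x * (-Real.log a) ≤ c1 ^ x * (-Real.log c1) ↔ x ≤ t) := by
    intro x
    have hax : 0 < a ^ x := Real.rpow_pos_of_pos ha0 x
    have hbx : 0 < c1 ^ x := Real.rpow_pos_of_pos hb x
    have h1 : a ^ x * (-Real.log a) ≤ c1 ^ x * (-Real.log c1)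
        ↔ (a / c1) ^ x ≤ Real.log c1 / Real.log a := by
      rw [Real.div_rpow ha0.le hb.le,
        show Real.log c1 / Real.log a = (-Real.log c1) / (-Real.log a) by
          rw [neg_div_neg_eq],
        div_le_div_iff₀ hbx (neg_pos.2 hla)]
      constructor <;> intro h <;> linarith
    rw [h1, show (a / c1 : ℝ) ^ x = Real.exp (Real.log (a / c1) * x) from
        Real.rpow_def_of_pos (by positivity) x,
      show Real.log c1 / Real.log a = Real.exp (Real.log (Real.log c1 / Real.log a)) from
        (Real.exp_log hq0).symm, Real.exp_le_exp, mul_comm, ← le_div_iff₀ hlr]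
  -- the function and its derivative
  have hd : ∀ x : ℝ, HasDerivAt (fun y : ℝ => a ^ y - c1 ^ y)
      (a ^ x * Real.log a - c1 ^ x * Real.log c1) x := fun x =>
    ((Real.hasStrictDerivAt_const_rpow ha0 x).hasDerivAt).sub
      ((Real.hasStrictDerivAt_const_rpow hb x).hasDerivAt)
  have hdiff : Differentiable ℝ (fun y : ℝ => a ^ y - c1 ^ y) :=
    fun x => (hd x).differentiableAt
  have hderiv : ∀ x : ℝ, deriv (fun y : ℝ => a ^ y - c1 ^ y) x
      = a ^ x * Real.log a - c1 ^ x * Real.log c1 := fun x => (hd x).deriv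
  have hmono : MonotoneOn (fun y : ℝ => a ^ y - c1 ^ y) (Set.Icc 0 t) := by
    apply monotoneOn_of_deriv_nonneg (convex_Icc 0 t)
      hdiff.continuous.continuousOn
      (fun x _ => (hdiff x).differentiableWithinAt)
    intro x hx
    rw [interior_Icc] at hx
    have := (key x).2 hx.2.le
    rw [hderiv x]
    linarith
  have hanti : AntitoneOn (fun y : ℝ => a ^ y - c1 ^ y) (Set.Ici t) := by
    apply antitoneOn_of_deriv_nonpos (convex_Ici t)
      hdiff.continuous.continuousOn
      (fun x _ => (hdiff x).differentiableWithinAt)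
    intro x hx
    rw [interior_Ici] at hx
    have hxt : ¬ x ≤ t := not_le.2 hx
    have := (key x).not.2 hxt
    rw [hderiv x]
    push_neg at this
    linarith
  have hpf : ∀ n : ℕ, p n = a ^ (n:ℝ) - c1 ^ (n:ℝ) := by
    intro n; rw [hp n, Real.rpow_natCast, Real.rpow_natCast]
  have hNt : (N:ℝ) ≤ t := by rw [hN]; exact Nat.floor_le ht0.le
  have htN : t ≤ (N:ℝ) + 1 := by
    rw [hN]
    have := Nat.lt_floor_add_one t
    push_cast
    linarith
  constructor
  · rcases le_total (p (N + 1)) (p N) with h | h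
    · exact ⟨N, hN1, max_eq_left h⟩
    · exact ⟨N + 1, le_trans hN1 (Nat.le_succ N), max_eq_right h⟩
  · rintro x ⟨n, hn1, rfl⟩
    rcases le_or_gt n N with hnN | hnN
    · have h1 : p n ≤ p N := by
        rw [hpf n, hpf N]
        exact hmono ⟨by positivity, le_trans (by exact_mod_cast hnN) hNt⟩
          ⟨Nat.cast_nonneg N, hNt⟩ (by exact_mod_cast hnN)
      exact le_trans h1 (le_max_left _ _)
    · have hn : N + 1 ≤ n := hnN
      have h1 : p n ≤ p (N + 1) := by
        rw [hpf n, hpf (N + 1)]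
        have hcast : ((N:ℝ) + 1) ≤ (n:ℝ) := by exact_mod_cast hn
        push_cast
        exact hanti (Set.mem_Ici.2 htN) (Set.mem_Ici.2 (htN.trans hcast)) hcast
      exact le_trans h1 (le_max_right _ _)
end

section
/- Let k1 = (5√5 − 11)/2 and define for λ ∈ (0,1] the quantities p(λ) = λ·k1 and p2(λ) = [λ(k1 + 2k2) + 2(1 − λ)]·λ·k1 where k2 = (7 − 3√5)/2. Then p2(λ) > p(λ) if and only if λ < 2/(1 + √5), i.e. λ is less than the inverse of the golden ratio φ = (1+√5)/2. -/
/-- With k1 = (5√5-11)/2, k2 = (7-3√5)/2, p(λ) = λ k1 and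
p2(λ) = [λ(k1+2k2) + 2(1-λ)] λ k1, for λ ∈ (0,1] one has
p2(λ) > p(λ) iff λ < 2/(1+√5). -/
theorem stmt3 (k1 k2 : ℝ) (hk1 : k1 = (5 * Real.sqrt 5 - 11) / 2)
    (hk2 : k2 = (7 - 3 * Real.sqrt 5) / 2) :
    ∀ l : ℝ, l ∈ Set.Ioc (0 : ℝ) 1 →
      ((l * (k1 + 2 * k2) + 2 * (1 - l)) * (l * k1) > l * k1 ↔
        l < 2 / (1 + Real.sqrt 5)) := by
  intro l hl
  obtain ⟨hl0, hl1⟩ := hl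
  set s := Real.sqrt 5 with hs
  have hs2 : s ^ 2 = 5 := Real.sq_sqrt (by norm_num)
  have hs_lb : (2.2 : ℝ) < s := by nlinarith [Real.sqrt_nonneg 5]
  have hk1pos : 0 < k1 := by rw [hk1]; nlinarith
  have hlk : 0 < l * k1 := mul_pos hl0 hk1pos
  rw [gt_iff_lt, lt_mul_iff_one_lt_left hlk]
  have hden : 0 < 1 + s := by nlinarith
  rw [lt_div_iff₀ hden]
  constructor
  · intro h; nlinarith
  · intro h; nlinarith
end

section
/- Define for λ ∈ (0,1) and n ∈ ℕ the function p_n(λ) = (1 + (√5 − 3)λ)^n − (1 + (√5/2)(√5 − 3)λ)^n. Then the limit as λ → 0+ of sup over n ≥ 1 of p_n(λ) equals 4^(2+√5) · 5^(−5/2−√5) · (√5 − 2). -/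
/-!
Write `A = 1 - α λ`, `B = 1 - β λ` with `0 < α < β`. With `u = (B / A) ^ n` and
`q = log A / log (B / A)` one has `A ^ n - B ^ n = u ^ q * (1 - u)`, and by weighted AM-GM
`u ^ q * (1 - u)` is maximal on `[0, 1]` at `u = q / (q + 1)`. As `λ → 0⁺`, `q → α / (β - α)`,
so the maximiser tends to `α / β`, and `n ≈ log (β / α) / log (A / B)` puts `u` there.
Hence `sup_n (A ^ n - B ^ n) → (α / β) ^ (α / (β - α)) * (1 - α / β)`. Here `α = 3 - √5` and
`β = √5 (3 - √5) / 2`, so `α / β = 2 / √5` and `α / (β - α) = 2 √5 + 4`.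
-/

open Real Filter Set Topology

theorem rpow_mul_one_sub_le {q u : ℝ} (hq : 0 < q) (hu₀ : 0 ≤ u) (hu₁ : u ≤ 1) :
    u ^ q * (1 - u) ≤ (q / (q + 1)) ^ q * (1 - q / (q + 1)) := by
  set v := q / (q + 1) with hv
  have hv₀ : 0 < v := by positivity
  have hv₁ : 0 < 1 - v := by rw [hv, sub_pos, div_lt_one (by positivity)]; linarith
  have hvq : v * (q + 1) = q := by rw [hv]; field_simp
  have hvq' : (1 - v) * (q + 1) = 1 := by rw [hv]; field_simp; ring
  have hamgm : (u / v) ^ v * ((1 - u) / (1 - v)) ^ (1 - v) ≤ 1 := by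
    have := geom_mean_le_arith_mean2_weighted hv₀.le hv₁.le (div_nonneg hu₀ hv₀.le)
      (div_nonneg (sub_nonneg.2 hu₁) hv₁.le) (add_sub_cancel v 1)
    rwa [mul_div_cancel₀ _ hv₀.ne', mul_div_cancel₀ _ hv₁.ne', add_sub_cancel] at this
  have hpow := rpow_le_one (by positivity) hamgm (by linarith : 0 ≤ q + 1)
  rw [mul_rpow (by positivity) (by positivity), ← rpow_mul (by positivity),
    ← rpow_mul (by positivity), hvq, hvq', rpow_one, div_rpow hu₀ hv₀.le,
    div_mul_div_comm, div_le_one (by positivity)] at hpow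
  exact hpow

theorem pow_sub_pow_eq_rpow_mul {A B : ℝ} (hA : 0 < A) (hB : 0 < B) (hAB : log B ≠ log A)
    (n : ℕ) :
    A ^ n - B ^ n = ((B / A) ^ n) ^ (log A / (log B - log A)) * (1 - (B / A) ^ n) := by
  have hpow : ((B / A) ^ n) ^ (log A / (log B - log A)) = A ^ n := by
    rw [rpow_def_of_pos (by positivity), log_pow, log_div hB.ne' hA.ne',
      ← exp_log (pow_pos hA n), log_pow]
    congr 1
    field_simp [sub_ne_zero.2 hAB]
  rw [hpow, div_pow]
  field_simp

theorem pow_sub_pow_le {A B : ℝ} (hB : 0 < B) (hBA : B < A) (hA : A < 1) (n : ℕ) :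
    A ^ n - B ^ n
      ≤ (log A / (log B - log A) / (log A / (log B - log A) + 1)) ^ (log A / (log B - log A))
        * (1 - log A / (log B - log A) / (log A / (log B - log A) + 1)) := by
  have hA₀ : 0 < A := hB.trans hBA
  have hlog := log_lt_log hB hBA
  have hq : 0 < log A / (log B - log A) := div_pos_of_neg_of_neg (log_neg hA₀ hA) (by linarith)
  rw [pow_sub_pow_eq_rpow_mul hA₀ hB hlog.ne]
  exact rpow_mul_one_sub_le hq (by positivity)
    (pow_le_one₀ (by positivity) ((div_le_one hA₀).2 hBA.le))

theorem tendsto_log_one_sub_mul_div (c : ℝ) :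
    Tendsto (fun t => log (1 - c * t) / t) (𝓝[≠] 0) (𝓝 (-c)) := by
  have hderiv : HasDerivAt (fun t => log (1 - c * t)) (-c) 0 := by
    simpa using ((hasDerivAt_id (0 : ℝ)).const_mul c).const_sub 1 |>.log (by simp)
  simpa [div_eq_inv_mul] using hderiv.tendsto_slope_zero

theorem tendsto_mul_natCeil_div {ι : Type*} {F : Filter ι} {d : ι → ℝ}
    (hd : Tendsto d F (𝓝[>] 0)) {c : ℝ} (hc : 0 ≤ c) :
    Tendsto (fun i => d i * ⌈c / d i⌉₊) F (𝓝 c) := by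
  have hd₀ : Tendsto d F (𝓝 0) := tendsto_nhds_of_tendsto_nhdsWithin hd
  refine tendsto_of_tendsto_of_tendsto_of_le_of_le' tendsto_const_nhds
    (by simpa using hd₀.const_add c) ?_ ?_
  · filter_upwards [hd self_mem_nhdsWithin] with i (hi : 0 < d i)
    calc c = d i * (c / d i) := by field_simp
      _ ≤ d i * ⌈c / d i⌉₊ := by gcongr; exact Nat.le_ceil _
  · filter_upwards [hd self_mem_nhdsWithin] with i (hi : 0 < d i)
    calc d i * ⌈c / d i⌉₊ ≤ d i * (c / d i + 1) := by
          gcongr; exact (Nat.ceil_lt_add_one (by positivity)).le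
      _ = c + d i := by field_simp

theorem tendsto_log_div_log_sub_log {α β : ℝ} (hαβ : α ≠ β) :
    Tendsto (fun t => log (1 - α * t) / (log (1 - β * t) - log (1 - α * t))) (𝓝[≠] 0)
      (𝓝 (α / (β - α))) := by
  have h := (tendsto_log_one_sub_mul_div α).div
    ((tendsto_log_one_sub_mul_div β).sub (tendsto_log_one_sub_mul_div α))
    (by rw [sub_ne_zero]; exact fun h => hαβ (neg_injective h).symm)
  rw [show -α / (-β - -α) = α / (β - α) by rw [← neg_div_neg_eq]; ring_nf] at h
  refine h.congr' ?_
  filter_upwards [self_mem_nhdsWithin] with t (ht : t ≠ 0)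
  simp only [Pi.div_apply]
  rw [← sub_div, div_div_div_cancel_right₀ ht]

theorem eventually_one_sub_mul_lt {α β : ℝ} (hα : 0 < α) (hαβ : α < β) :
    ∀ᶠ t in 𝓝[>] 0, 0 < 1 - β * t ∧ 1 - β * t < 1 - α * t ∧ 1 - α * t < 1 := by
  filter_upwards [Ioo_mem_nhdsGT (one_div_pos.2 (hα.trans hαβ))] with t ⟨ht₀, htβ⟩
  rw [lt_div_iff₀' (hα.trans hαβ)] at htβ
  refine ⟨by linarith, ?_, ?_⟩ <;> nlinarith

theorem tendsto_log_sub_log_nhdsGT {α β : ℝ} (hα : 0 < α) (hαβ : α < β) :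
    Tendsto (fun t => log (1 - α * t) - log (1 - β * t)) (𝓝[>] 0) (𝓝[>] 0) := by
  refine tendsto_nhdsWithin_of_tendsto_nhds_of_eventually_within _ ?_ ?_
  · have : ContinuousAt (fun t => log (1 - α * t) - log (1 - β * t)) 0 := by
      fun_prop (disch := simp)
    simpa using this.tendsto.mono_left nhdsWithin_le_nhds
  · filter_upwards [eventually_one_sub_mul_lt hα hαβ] with t ⟨hB, hBA, _⟩
    exact sub_pos.2 (log_lt_log hB hBA)

theorem tendsto_div_pow_natCeil {α β : ℝ} (hα : 0 < α) (hαβ : α < β) :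
    Tendsto (fun t => ((1 - β * t) / (1 - α * t)) ^
        ⌈log (β / α) / (log (1 - α * t) - log (1 - β * t))⌉₊) (𝓝[>] 0) (𝓝 (α / β)) := by
  have h := (tendsto_mul_natCeil_div (tendsto_log_sub_log_nhdsGT hα hαβ)
    (log_nonneg ((one_le_div hα).2 hαβ.le))).neg.rexp
  rw [exp_neg, exp_log (div_pos (hα.trans hαβ) hα), inv_div] at h
  refine h.congr' ?_
  filter_upwards [eventually_one_sub_mul_lt hα hαβ] with t ⟨hB, hBA, _⟩
  rw [← exp_log (pow_pos (div_pos hB (hB.trans hBA)) _), log_pow,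
    log_div hB.ne' (hB.trans hBA).ne']
  ring_nf

theorem tendsto_sSup_pow_sub_pow {α β : ℝ} (hα : 0 < α) (hαβ : α < β) :
    Tendsto (fun t => sSup {x : ℝ | ∃ n : ℕ, 1 ≤ n ∧ x = (1 - α * t) ^ n - (1 - β * t) ^ n})
      (𝓝[>] 0) (𝓝 ((α / β) ^ (α / (β - α)) * (1 - α / β))) := by
  have hβ : 0 < β := hα.trans hαβ
  set q := fun t : ℝ => log (1 - α * t) / (log (1 - β * t) - log (1 - α * t))
  set d := fun t : ℝ => log (1 - α * t) - log (1 - β * t)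
  set N := fun t => ⌈log (β / α) / d t⌉₊
  have hd := tendsto_log_sub_log_nhdsGT hα hαβ
  have hq : Tendsto q (𝓝[>] 0) (𝓝 (α / (β - α))) :=
    (tendsto_log_div_log_sub_log hαβ.ne).mono_left (nhdsGT_le_nhdsNE 0)
  have hv : α / (β - α) / (α / (β - α) + 1) = α / β := by
    field_simp [(sub_pos.2 hαβ).ne', hβ.ne']
    ring
  have hu : Tendsto (fun t => ((1 - β * t) / (1 - α * t)) ^ N t) (𝓝[>] 0) (𝓝 (α / β)) :=
    tendsto_div_pow_natCeil hα hαβ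
  have hupper : Tendsto (fun t => (q t / (q t + 1)) ^ q t * (1 - q t / (q t + 1))) (𝓝[>] 0)
      (𝓝 ((α / β) ^ (α / (β - α)) * (1 - α / β))) := by
    rw [← hv]
    have hmax := hq.div (hq.add_const 1) (by positivity)
    exact (hmax.rpow hq (Or.inl (by positivity))).mul (tendsto_const_nhds.sub hmax)
  have hlower : Tendsto (fun t => (((1 - β * t) / (1 - α * t)) ^ N t) ^ q t
      * (1 - ((1 - β * t) / (1 - α * t)) ^ N t)) (𝓝[>] 0)
      (𝓝 ((α / β) ^ (α / (β - α)) * (1 - α / β))) :=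
    (hu.rpow hq (Or.inl (by positivity))).mul (tendsto_const_nhds.sub hu)
  refine tendsto_of_tendsto_of_tendsto_of_le_of_le' hlower hupper ?_ ?_
  · filter_upwards [eventually_one_sub_mul_lt hα hαβ, hd self_mem_nhdsWithin]
      with t ⟨hB, hBA, hA⟩ (hdt : 0 < d t)
    rw [← pow_sub_pow_eq_rpow_mul (hB.trans hBA) hB (log_lt_log hB hBA).ne]
    refine le_csSup ⟨(q t / (q t + 1)) ^ q t * (1 - q t / (q t + 1)), ?_⟩ ⟨N t, ?_, rfl⟩
    · rintro _ ⟨n, -, rfl⟩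
      exact pow_sub_pow_le hB hBA hA n
    · exact Nat.one_le_ceil_iff.2 (div_pos (log_pos ((one_lt_div hα).2 hαβ)) hdt)
  · filter_upwards [eventually_one_sub_mul_lt hα hαβ] with t ⟨hB, hBA, hA⟩
    refine csSup_le ⟨_, 1, le_rfl, rfl⟩ ?_
    rintro _ ⟨n, -, rfl⟩
    exact pow_sub_pow_le hB hBA hA n

theorem two_div_sqrt_five_rpow_mul :
    (2 / √5) ^ (2 * √5 + 4) * (1 - 2 / √5)
      = (4 : ℝ) ^ ((2 : ℝ) + √5) * (5 : ℝ) ^ (-(5 : ℝ) / 2 - √5) * (√5 - 2) := by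
  have hsq : (2 / √5) ^ (2 : ℝ) = 4 / 5 := by
    rw [rpow_two, div_pow, sq_sqrt (by norm_num)]; norm_num
  have hfive : (5 : ℝ) ^ (-(5 : ℝ) / 2 - √5) = ((5 : ℝ) ^ ((2 : ℝ) + √5))⁻¹ / √5 := by
    rw [show -(5 : ℝ) / 2 - √5 = -(2 + √5) + -(1 / 2) by ring, rpow_add (by norm_num),
      rpow_neg (by norm_num), rpow_neg (by norm_num), ← sqrt_eq_rpow, div_eq_mul_inv]
  rw [show 2 * √5 + 4 = 2 * (2 + √5) by ring, rpow_mul (by positivity), hsq,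
    div_rpow (by norm_num) (by norm_num), hfive]
  field_simp

/-- With p_n(λ) = (1 + (√5-3)λ)^n − (1 + (√5/2)(√5-3)λ)^n, the limit as
λ → 0+ of sup_{n ≥ 1} p_n(λ) equals 4^(2+√5) · 5^(−5/2−√5) · (√5 − 2). -/
theorem stmt4 :
    Filter.Tendsto
      (fun l : ℝ => sSup {x : ℝ | ∃ n : ℕ, 1 ≤ n ∧
        x = (1 + (Real.sqrt 5 - 3) * l) ^ n -
            (1 + (Real.sqrt 5 / 2) * (Real.sqrt 5 - 3) * l) ^ n})
      (nhdsWithin 0 (Set.Ioi 0))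
      (nhds ((4 : ℝ) ^ ((2 : ℝ) + Real.sqrt 5) *
        (5 : ℝ) ^ (-(5 : ℝ) / 2 - Real.sqrt 5) * (Real.sqrt 5 - 2))) := by
  have hs : √5 ^ 2 = 5 := sq_sqrt (by norm_num)
  have hs₂ : 2 < √5 := by nlinarith [sqrt_nonneg 5]
  have hα : 0 < 3 - √5 := by nlinarith
  have hαβ : 3 - √5 < √5 * (3 - √5) / 2 := by nlinarith
  have hratio : (3 - √5) / (√5 * (3 - √5) / 2) = 2 / √5 := by
    field_simp
  have hexp : (3 - √5) / (√5 * (3 - √5) / 2 - (3 - √5)) = 2 * √5 + 4 := by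
    rw [div_eq_iff (by nlinarith)]
    linear_combination (√5 - 3) * hs
  have h := tendsto_sSup_pow_sub_pow hα hαβ
  rw [hratio, hexp, two_div_sqrt_five_rpow_mul] at h
  have hA : ∀ l : ℝ, 1 + (√5 - 3) * l = 1 - (3 - √5) * l := fun l => by ring
  have hB : ∀ l : ℝ, 1 + √5 / 2 * (√5 - 3) * l = 1 - √5 * (3 - √5) / 2 * l := fun l => by ring
  simpa only [hA, hB] using h
end

section
/- For r, s ∈ (0,1), the quantity F(r,s) = (1−r)·r·(1−s)·s / (1 − r·s) satisfies F(r,s) ≤ (5√5 − 11)/2, with equality if and only if r = s = (√5 − 1)/2. -/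
/-- For r, s ∈ (0,1), F(r,s) = (1−r)r(1−s)s/(1−rs) ≤ (5√5−11)/2, with
equality iff r = s = (√5−1)/2. -/
theorem stmt5 (r s : ℝ) (hr : r ∈ Set.Ioo (0 : ℝ) 1) (hs : s ∈ Set.Ioo (0 : ℝ) 1) :
    (1 - r) * r * (1 - s) * s / (1 - r * s) ≤ (5 * Real.sqrt 5 - 11) / 2 ∧
    ((1 - r) * r * (1 - s) * s / (1 - r * s) = (5 * Real.sqrt 5 - 11) / 2 ↔
      r = (Real.sqrt 5 - 1) / 2 ∧ s = (Real.sqrt 5 - 1) / 2) := by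
  obtain ⟨hr0, hr1⟩ := hr
  obtain ⟨hs0, hs1⟩ := hs
  set t := Real.sqrt 5 with htdef
  have ht : t ^ 2 = 5 := Real.sq_sqrt (by norm_num)
  have h2 : 2 < t := by nlinarith [Real.sqrt_nonneg 5]
  have h3 : t < 3 := by nlinarith [Real.sqrt_nonneg 5]
  have hden : 0 < 1 - r * s := by nlinarith
  set a := Real.sqrt r with hadef
  set b := Real.sqrt s with hbdef
  have ha2 : a ^ 2 = r := Real.sq_sqrt hr0.le
  have hb2 : b ^ 2 = s := Real.sq_sqrt hs0.le
  have ha0 : 0 < a := Real.sqrt_pos.2 hr0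
  have hb0 : 0 < b := Real.sqrt_pos.2 hs0
  have ha1 : a < 1 := by nlinarith
  have hb1 : b < 1 := by nlinarith
  have hid : (5 * t - 11) / 2 * (1 - r * s) - (1 - r) * r * (1 - s) * s =
      (1 - a * b) * (a * b - (t - 1) / 2) ^ 2 * (a * b + t - 2) +
      a ^ 2 * b ^ 2 * (a - b) ^ 2 := by
    rw [← ha2, ← hb2]
    linear_combination (1 - t / 4 + a * b * t / 4 - a * b / 4 - 3 / 4 * a ^ 2 * b ^ 2) * ht
  have hab1 : a * b < 1 := by nlinarith
  have habt : 0 < a * b + t - 2 := by nlinarith [mul_pos ha0 hb0]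
  have hterm1 : 0 ≤ (1 - a * b) * (a * b - (t - 1) / 2) ^ 2 * (a * b + t - 2) :=
    mul_nonneg (mul_nonneg (by linarith) (sq_nonneg _)) habt.le
  have hterm2 : 0 ≤ a ^ 2 * b ^ 2 * (a - b) ^ 2 := by positivity
  refine ⟨by rw [div_le_iff₀ hden]; linarith, ?_, ?_⟩
  · intro heq
    rw [div_eq_iff hden.ne'] at heq
    have h1 : (1 - a * b) * (a * b - (t - 1) / 2) ^ 2 * (a * b + t - 2) = 0 := by linarith
    have h2' : a ^ 2 * b ^ 2 * (a - b) ^ 2 = 0 := by linarith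
    have hab : a = b := by
      have h4 : (a - b) ^ 2 = 0 := by
        rcases mul_eq_zero.1 h2' with h | h
        · rcases mul_eq_zero.1 h with h' | h'
          · exact absurd h' (pow_ne_zero 2 ha0.ne')
          · exact absurd h' (pow_ne_zero 2 hb0.ne')
        · exact h
      have := pow_eq_zero_iff (two_ne_zero) |>.1 h4
      linarith
    have habφ : a * b = (t - 1) / 2 := by
      rcases mul_eq_zero.1 h1 with h | h
      · rcases mul_eq_zero.1 h with h' | h'
        · linarith
        · have := pow_eq_zero_iff (two_ne_zero) |>.1 h'
          linarith
      · linarith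
    constructor
    · rw [← ha2, pow_two, hab] at *; linarith [habφ]
    · rw [← hb2, pow_two, ← hab] at *; linarith [habφ]
  · rintro ⟨hrv, hsv⟩
    subst hrv hsv
    rw [div_eq_iff hden.ne']
    linear_combination (t ^ 2 / 16 + t / 8 - 15 / 16) * ht
end

section
/- Define f(c0, c1, ..., c7) = c0² + 4c0(c1 + 2c4 − 1) + 8(c4(c1 + c2 + c3 + c5 + c6 − 1) + c4² − c5·c7) over the domain {c_i ≥ 0 for all i, Σ_{i=0}^{7} c_i ≤ 1}. Then the minimum of f over this domain is −3, attained at c0 = 1 and c1 = ⋯ = c7 = 0. -/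
/-- the minimum of
f(c0,…,c7) = c0² + 4c0(c1+2c4−1) + 8(c4(c1+c2+c3+c5+c6−1) + c4² − c5c7)
over {cᵢ ≥ 0, Σᵢ cᵢ ≤ 1} is −3, attained at c0 = 1, c1 = ⋯ = c7 = 0. -/
theorem stmt11 (f : ℝ → ℝ → ℝ → ℝ → ℝ → ℝ → ℝ → ℝ → ℝ)
    (hf : ∀ c0 c1 c2 c3 c4 c5 c6 c7,
      f c0 c1 c2 c3 c4 c5 c6 c7 =
        c0 ^ 2 + 4 * c0 * (c1 + 2 * c4 - 1) +
          8 * (c4 * (c1 + c2 + c3 + c5 + c6 - 1) + c4 ^ 2 - c5 * c7)) :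
    IsLeast {y : ℝ | ∃ c0 c1 c2 c3 c4 c5 c6 c7 : ℝ,
        0 ≤ c0 ∧ 0 ≤ c1 ∧ 0 ≤ c2 ∧ 0 ≤ c3 ∧ 0 ≤ c4 ∧ 0 ≤ c5 ∧ 0 ≤ c6 ∧ 0 ≤ c7 ∧
        c0 + c1 + c2 + c3 + c4 + c5 + c6 + c7 ≤ 1 ∧
        y = f c0 c1 c2 c3 c4 c5 c6 c7} (-3) ∧
    f 1 0 0 0 0 0 0 0 = -3 := by
  refine ⟨⟨⟨1, 0, 0, 0, 0, 0, 0, 0, by norm_num, by norm_num, by norm_num, by norm_num,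
    by norm_num, by norm_num, by norm_num, by norm_num, by norm_num, by rw [hf]; ring⟩, ?_⟩,
    by rw [hf]; ring⟩
  rintro y ⟨c0, c1, c2, c3, c4, c5, c6, c7, h0, h1, h2, h3, h4, h5, h6, h7, hs, rfl⟩
  rw [hf]
  have hA : (0:ℝ) ≤ 1 - c0 - c1 - c2 - c3 - c4 - c5 - c6 - c7 := by linarith
  have t1 : (0:ℝ) ≤ c0 * c1 := mul_nonneg h0 h1
  have t2 : (0:ℝ) ≤ c5 * (1 - c0 - c1 - c2 - c3 - c4 - c5 - c6 - c7) := mul_nonneg h5 hA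
  have t3 : (0:ℝ) ≤ (c4 + c5 - c7 - (1 - c0 - c1 - c2 - c3 - c4 - c5 - c6 - c7)) ^ 2 :=
    sq_nonneg _
  have t4 : (0:ℝ) ≤ ((1 - c0) - (c4 + c5 + c7 + (1 - c0 - c1 - c2 - c3 - c4 - c5 - c6 - c7))) *
      ((1 - c0) + (c4 + c5 + c7 + (1 - c0 - c1 - c2 - c3 - c4 - c5 - c6 - c7))) :=
    mul_nonneg (by linarith) (by linarith)
  have t5 : (0:ℝ) ≤ c0 * (1 - c0) := mul_nonneg h0 (by linarith)
  nlinarith [t1, t2, t3, t4, t5]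
end

section
/- Let c0 ∈ (0,1] and let c1,...,c8 ≥ 0 with c0 + Σ_{i=1}^{8} c_i = 1. Set K = 2(1+c0) and K2 = 2 + c0² + 4c0(c1 + 2c4) + 8(c4(c1 + c2 + c3 + c5 + c6 − 1) + c4² − c5c7). If 0 < λ < (2/3)·c0, then (K − 2) + (K2 − 2K + 2)·λ > 0, i.e., 2-copy OR-AND distillation of C̃(λ) = λ(c0 P_NL + Σ c_i P_{Li}) + (1−λ)P_{L1} strictly increases the CHSH value. -/
set_option maxRecDepth 8000 in
set_option maxHeartbeats 800000 in
/-- for c0 ∈ (0,1], c1,…,c8 ≥ 0 with c0 + Σ cᵢ = 1,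
K = 2(1+c0) and K2 = 2 + c0² + 4c0(c1+2c4) + 8(c4(c1+c2+c3+c5+c6−1)+c4²−c5c7),
if 0 < λ < (2/3)c0 then (K−2) + (K2−2K+2)λ > 0. -/
theorem stmt12 (c0 c1 c2 c3 c4 c5 c6 c7 c8 : ℝ)
    (hc0 : c0 ∈ Set.Ioc (0 : ℝ) 1)
    (h1 : 0 ≤ c1) (h2 : 0 ≤ c2) (h3 : 0 ≤ c3) (h4 : 0 ≤ c4)
    (h5 : 0 ≤ c5) (h6 : 0 ≤ c6) (h7 : 0 ≤ c7) (h8 : 0 ≤ c8)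
    (hsum : c0 + (c1 + c2 + c3 + c4 + c5 + c6 + c7 + c8) = 1)
    (K K2 : ℝ) (hK : K = 2 * (1 + c0))
    (hK2 : K2 = 2 + c0 ^ 2 + 4 * c0 * (c1 + 2 * c4) +
      8 * (c4 * (c1 + c2 + c3 + c5 + c6 - 1) + c4 ^ 2 - c5 * c7))
    (l : ℝ) (hl : 0 < l) (hl2 : l < 2 / 3 * c0) :
    (K - 2) + (K2 - 2 * K + 2) * l > 0 := by
  obtain ⟨hc0p, hc0le⟩ := hc0
  have hM : K2 - 2 * K + 2 ≥ -3 := by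
    subst hK hK2
    nlinarith [sq_nonneg (c5 - c7), sq_nonneg (c0 + 3*c4 - 1),
      mul_nonneg (sub_nonneg.2 hc0le) hc0p.le,
      mul_nonneg h4 (by linarith : (0:ℝ) ≤ c1 + c2 + c3 + c6),
      mul_nonneg hc0p.le h1,
      mul_nonneg (by linarith : (0:ℝ) ≤ c1 + c2 + c3 + c6 + c8)
        (by linarith : (0:ℝ) ≤ c5 + c7)]
  nlinarith [mul_nonneg (by linarith : (0:ℝ) ≤ K2 - 2*K + 2 + 3) hl.le]
end

section
/- For a box P = {p(ab|xy)} and n ≥ 1, the n-fold OR-AND wiring of n copies of P is the box P^(n) with p^(n)(00|xy) = (p(00|xy) + p(01|xy))^n − p(01|xy)^n, p^(n)(01|xy) = p(01|xy)^n, p^(n)(11|xy) = (p(11|xy) + p(01|xy))^n − p(01|xy)^n, and p^(n)(10|xy) = 1 − p^(n)(00|xy) − p^(n)(01|xy) − p^(n)(11|xy). That is, the iterated application of the 2-copy OR-AND wiring W (P^(1) = P, P^(k+1) = W[P^(k), P]) satisfies these closed-form expressions for all n ≥ 1. -/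
/-- A 2-input 2-output box. -/
abbrev Box := Bool → Bool → Bool → Bool → ℝ

def IsBox (p : Box) : Prop :=
  (∀ a b x y, 0 ≤ p a b x y) ∧ (∀ x y, (∑ a : Bool, ∑ b : Bool, p a b x y) = 1)

noncomputable def wire00 (p1 p2 : Box) (x y : Bool) : ℝ :=
  ∑ b1 : Bool, ∑ b2 : Bool,
    if (b1 && b2) = false then p1 false b1 x y * p2 false b2 x y else 0

noncomputable def wire11 (p1 p2 : Box) (x y : Bool) : ℝ :=
  ∑ a1 : Bool, ∑ a2 : Bool,
    if (a1 || a2) = true then p1 a1 true x y * p2 a2 true x y else 0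

/-- The OR-AND wiring of two boxes. -/
noncomputable def wire (p1 p2 : Box) : Box := fun a b x y =>
  match a, b with
  | false, false => wire00 p1 p2 x y
  | false, true  => p1 false true x y * p2 false true x y
  | true,  true  => wire11 p1 p2 x y
  | true,  false =>
      1 - wire00 p1 p2 x y - p1 false true x y * p2 false true x y - wire11 p1 p2 x y

/-- Iterated OR-AND wiring: `iterWire p n` is `P^(n)` for `n ≥ 1`, i.e.
`P^(1) = P` and `P^(k+1) = W[P^(k), P]`.  (The value at `n = 0` is junk.) -/
noncomputable def iterWire (p : Box) : ℕ → Box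
  | 0 => p
  | 1 => p
  | (n + 2) => wire (iterWire p (n + 1)) p

/-- closed form for the n-fold OR-AND wiring of n copies of a box P:
p^(n)(00|xy) = (p(00|xy)+p(01|xy))^n − p(01|xy)^n, p^(n)(01|xy) = p(01|xy)^n,
p^(n)(11|xy) = (p(11|xy)+p(01|xy))^n − p(01|xy)^n, and p^(n)(10|xy) by normalization. -/
theorem stmt14 (p : Box) (hp : IsBox p) (n : ℕ) (hn : 1 ≤ n) (x y : Bool) :
    iterWire p n false false x y =
        (p false false x y + p false true x y) ^ n - (p false true x y) ^ n ∧
    iterWire p n false true x y = (p false true x y) ^ n ∧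
    iterWire p n true true x y =
        (p true true x y + p false true x y) ^ n - (p false true x y) ^ n ∧
    iterWire p n true false x y =
        1 - ((p false false x y + p false true x y) ^ n - (p false true x y) ^ n)
          - (p false true x y) ^ n
          - ((p true true x y + p false true x y) ^ n - (p false true x y) ^ n) := by
  induction n, hn using Nat.le_induction with
  | base =>
    have h := hp.2 x y
    simp [Fintype.sum_bool] at h
    simp only [iterWire, pow_one]
    refine ⟨by ring, by trivial, by ring, by linarith⟩
  | succ n hn ih =>
    obtain ⟨h00, h01, h11, h10⟩ := ih
    obtain ⟨m, rfl⟩ := Nat.exists_eq_add_of_le hn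
    have hW : iterWire p (1 + m + 1) = wire (iterWire p (1 + m)) p := by
      have h2 : 1 + m + 1 = m + 2 := by omega
      have h1 : 1 + m = m + 1 := by omega
      rw [h2, iterWire, h1]
    rw [hW]
    simp only [wire, wire00, wire11, Fintype.sum_bool]
    rw [h00, h01, h11]
    refine ⟨?_, ?_, ?_, ?_⟩ <;> (try simp) <;> ring
end

section
/- For λ ∈ (0,1] and n ≥ 1, the CHSH value of the n-copy OR-AND wiring of B̃_Q(λ) = λ·B_Q^max + (1−λ)·P_{L1} equals B^(n)(λ) = 2 − 8(1 − λ/2)^n + 12(1 − (6−√2)λ/8)^n − 4(1 − (6+√2)λ/8)^n. In particular B^(1)(λ) = 2 + (2√2 − 2)λ. -/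
/-- Correlator ⟨xy⟩ = Σ_{a,b} (−1)^{a⊕b} p(ab|xy). -/
noncomputable def corr (p : Box) (x y : Bool) : ℝ :=
  ∑ a : Bool, ∑ b : Bool, (if xor a b then (-1 : ℝ) else 1) * p a b x y

/-- CHSH value ⟨00⟩ − ⟨01⟩ − ⟨10⟩ − ⟨11⟩. -/
noncomputable def chsh (p : Box) : ℝ :=
  corr p false false - corr p false true - corr p true false - corr p true true

/-- The PR box P_NL^{110}: a ⊕ b = xy ⊕ x ⊕ y with uniform marginals. -/
noncomputable def PNL : Box := fun a b x y =>
  if xor a b = xor (x && y) (xor x y) then 1 / 2 else 0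

/-- Local deterministic box P_L^{α1α2β1β2}: a = α1 x ⊕ α2, b = β1 y ⊕ β2. -/
noncomputable def PLd (α1 α2 β1 β2 : Bool) : Box := fun a b x y =>
  if a = xor (α1 && x) α2 ∧ b = xor (β1 && y) β2 then 1 else 0

/-- Sum of the eight local deterministic boxes saturating the CHSH bound. -/
noncomputable def sumPL : Box := fun a b x y =>
  PLd false false false true a b x y + PLd false true false false a b x y +
  PLd false true true true a b x y + PLd true true false true a b x y +
  PLd true true true true a b x y + PLd true false false false a b x y +
  PLd false false true false a b x y + PLd true false true false a b x y

/-- The Tsirelson-bound-saturating quantum box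
B_Q^max = (√2−1) P_NL + (1/4)(1 − 1/√2) Σᵢ P_{Lᵢ}. -/
noncomputable def BQmax : Box := fun a b x y =>
  (Real.sqrt 2 - 1) * PNL a b x y +
    1 / 4 * (1 - 1 / Real.sqrt 2) * sumPL a b x y

/-- B̃_Q(λ) = λ B_Q^max + (1−λ) P_{L1}. -/
noncomputable def Btilde (l : ℝ) : Box := fun a b x y =>
  l * BQmax a b x y + (1 - l) * PLd false false false true a b x y

/-- The 01-entry of `Btilde l`. -/
noncomputable def Qv (l : ℝ) (x y : Bool) : ℝ :=
  if x = false ∧ y = false then 1 - (6 + Real.sqrt 2) * l / 8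
  else 1 - (6 - Real.sqrt 2) * l / 8

/-- Closed form for the n-fold wiring. -/
noncomputable def Ebox (l : ℝ) (n : ℕ) : Box := fun a b x y =>
  match a, b with
  | false, false => (1 - l / 2) ^ n - (Qv l x y) ^ n
  | false, true  => (Qv l x y) ^ n
  | true,  true  => (1 - l / 2) ^ n - (Qv l x y) ^ n
  | true,  false => 1 - 2 * ((1 - l / 2) ^ n - (Qv l x y) ^ n) - (Qv l x y) ^ n

lemma inv_sqrt2 : (Real.sqrt 2)⁻¹ = Real.sqrt 2 / 2 := by
  rw [inv_eq_one_div, div_eq_div_iff (by positivity) (by norm_num), one_mul,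
    Real.mul_self_sqrt (by norm_num)]

lemma Bt_entries (l : ℝ) (x y : Bool) :
    Btilde l false true x y = Qv l x y ∧
    Btilde l false false x y = (1 - l / 2) - Qv l x y ∧
    Btilde l true true x y = (1 - l / 2) - Qv l x y ∧
    Btilde l true false x y = 1 - 2 * ((1 - l / 2) - Qv l x y) - Qv l x y := by
  cases x <;> cases y <;>
    · refine ⟨?_, ?_, ?_, ?_⟩ <;>
      · simp [Btilde, BQmax, PNL, PLd, sumPL, Qv, one_div, inv_sqrt2]
        try ring

lemma iter_closed (l : ℝ) : ∀ n : ℕ, 1 ≤ n → ∀ a b x y,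
    iterWire (Btilde l) n a b x y = Ebox l n a b x y := by
  intro n
  induction n with
  | zero => omega
  | succ m ih =>
    intro _ a b x y
    rcases Nat.eq_zero_or_pos m with hm | hm
    · subst hm
      obtain ⟨h1, h2, h3, h4⟩ := Bt_entries l x y
      show Btilde l a b x y = Ebox l 1 a b x y
      cases a <;> cases b <;> simp [Ebox, h1, h2, h3, h4]
    · obtain ⟨k, rfl⟩ : ∃ k, m = k + 1 := ⟨m - 1, by omega⟩
      have IH := ih hm
      obtain ⟨h1, h2, h3, h4⟩ := Bt_entries l x y
      have e : iterWire (Btilde l) (k + 2) a b x y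
          = wire (iterWire (Btilde l) (k + 1)) (Btilde l) a b x y := rfl
      rw [e]
      cases a <;> cases b <;>
        · simp [wire, wire00, wire11, Fintype.sum_bool, IH, h1, h2, h3, h4, Ebox]
          try ring


/-- for λ ∈ (0,1] and n ≥ 1, the CHSH value of the n-copy OR-AND
wiring of B̃_Q(λ) equals
2 − 8(1 − λ/2)^n + 12(1 − (6−√2)λ/8)^n − 4(1 − (6+√2)λ/8)^n;
in particular for n = 1 it is 2 + (2√2 − 2)λ. -/

theorem stmt15 (l : ℝ) (hl : l ∈ Set.Ioc (0 : ℝ) 1) :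
    (∀ n : ℕ, 1 ≤ n →
      chsh (iterWire (Btilde l) n) =
        2 - 8 * (1 - l / 2) ^ n + 12 * (1 - (6 - Real.sqrt 2) * l / 8) ^ n -
          4 * (1 - (6 + Real.sqrt 2) * l / 8) ^ n) ∧
    chsh (Btilde l) = 2 + (2 * Real.sqrt 2 - 2) * l := by
  have key : ∀ n : ℕ, 1 ≤ n →
      chsh (iterWire (Btilde l) n) =
        2 - 8 * (1 - l / 2) ^ n + 12 * (1 - (6 - Real.sqrt 2) * l / 8) ^ n -
          4 * (1 - (6 + Real.sqrt 2) * l / 8) ^ n := by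
    intro n hn
    have h := iter_closed l n hn
    simp only [chsh, corr, Fintype.sum_bool, h]
    simp only [Ebox, Qv]
    norm_num
    ring
  refine ⟨key, ?_⟩
  have h1 := key 1 le_rfl
  have e : iterWire (Btilde l) 1 = Btilde l := rfl
  rw [e] at h1
  rw [h1]
  ring
end

section
/- Let r, s ∈ (0,1) and let H^(r,s) be a Hardy correlation with Hardy success p = (1−r)r(1−s)s/(1−rs) and coefficient c1 = (1−r)²s/(1−rs) on P_{L1} (so that the wired Hardy success after 2-copy OR-AND is p2 = (p + c1)² − c1²). Then p2 > p if and only if r²(s + s²) − r(s² + 2s) + (2s − 1) > 0. -/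
/-- for r, s ∈ (0,1), with Hardy success p = (1−r)r(1−s)s/(1−rs),
coefficient c1 = (1−r)²s/(1−rs) on P_{L1}, and wired Hardy success
p2 = (p + c1)² − c1², one has p2 > p iff r²(s+s²) − r(s²+2s) + (2s−1) > 0. -/
theorem stmt16 (r s : ℝ) (hr : r ∈ Set.Ioo (0 : ℝ) 1) (hs : s ∈ Set.Ioo (0 : ℝ) 1)
    (p c1 p2 : ℝ)
    (hp : p = (1 - r) * r * (1 - s) * s / (1 - r * s))
    (hc1 : c1 = (1 - r) ^ 2 * s / (1 - r * s))
    (hp2 : p2 = (p + c1) ^ 2 - c1 ^ 2) :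
    p2 > p ↔ r ^ 2 * (s + s ^ 2) - r * (s ^ 2 + 2 * s) + (2 * s - 1) > 0 := by
  obtain ⟨hr0, hr1⟩ := hr
  obtain ⟨hs0, hs1⟩ := hs
  have hd : 0 < 1 - r * s := by nlinarith
  have hp0 : 0 < p := by
    rw [hp]
    apply div_pos _ hd
    exact mul_pos (mul_pos (mul_pos (by linarith) hr0) (by linarith)) hs0
  have key : p + 2 * c1 - 1 =
      (r ^ 2 * (s + s ^ 2) - r * (s ^ 2 + 2 * s) + (2 * s - 1)) / (1 - r * s) := by
    rw [hp, hc1]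
    field_simp
    ring
  have h1 : p2 - p = p * (p + 2 * c1 - 1) := by rw [hp2]; ring
  constructor
  · intro h
    have h2 : 0 < p * (p + 2 * c1 - 1) := by linarith
    have h3 : 0 < p + 2 * c1 - 1 := (mul_pos_iff.mp h2).elim (fun ⟨_, h⟩ => h) (fun ⟨h, _⟩ => absurd hp0 (not_lt.mpr h.le))
    rw [key] at h3
    exact (div_pos_iff.mp h3).elim (fun ⟨h, _⟩ => h) (fun ⟨_, h⟩ => absurd hd (not_lt.mpr h.le))
  · intro h
    have h3 : 0 < p + 2 * c1 - 1 := by rw [key]; exact div_pos h hd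
    nlinarith [mul_pos hp0 h3]
end
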